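/- Let G be a nontrivial finite group and take the generating set G\{1} with d = |G| − 1 generators. Then the relation module R = R_{|G|−1} is isomorphic as a ZG-module to ΔG ⊗_Z ΔG with diagonal G-action. -/

import Mathlib

open Finsupp TensorProduct Representation

noncomputable section

/-- The augmentation map `ℤ[G] → ℤ`. -/
def aug (S : Type) : (S →₀ ℤ) →ₗ[ℤ] ℤ :=
  Finsupp.linearCombination ℤ (fun _ : S => (1 : ℤ))

/-- The permutation representation on `S →₀ ℤ` (the pre-2025 `Representation.ofMulAction`). -/
def ofMulActionFinsupp (k G H : Type) [CommSemiring k] [Monoid G] [MulAction G H] :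
    Representation k G (H →₀ k) where
  toFun g := Finsupp.lmapDomain k k (g • ·)
  map_one' := by ext x y; simp
  map_mul' x y := by ext z w; simp [mul_smul]

theorem aug_ofMulAction {G S : Type} [Group G] [MulAction G S] (g : G) (f : S →₀ ℤ) :
    aug S ((ofMulActionFinsupp ℤ G S) g f) = aug S f := by
  simp only [aug, ofMulActionFinsupp, MonoidHom.coe_mk, OneHom.coe_mk, Finsupp.lmapDomain_apply,
    Finsupp.linearCombination_mapDomain]
  rfl

/-- Restriction of a representation to an invariant submodule. -/
def subRep {G : Type} [Group G] {V : Type} [AddCommGroup V] [Module ℤ V]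
    (ρ : Representation ℤ G V) (p : Submodule ℤ V) (hp : ∀ g, ∀ x ∈ p, ρ g x ∈ p) :
    Representation ℤ G p where
  toFun g := (ρ g).restrict (hp g)
  map_one' := by ext x; simp [LinearMap.restrict_apply]
  map_mul' g h := by ext x; simp [LinearMap.restrict_apply]

/-- The representation of `G` on the augmentation ideal `ΔG ⊆ ℤ[G]` (left
multiplication action). -/
def deltaG (G : Type) [Group G] : Representation ℤ G (LinearMap.ker (aug G)) :=
  subRep (ofMulActionFinsupp ℤ G G) (LinearMap.ker (aug G))
    (fun g x hx => by
      simp only [LinearMap.mem_ker] at hx ⊢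
      rw [aug_ofMulAction, hx])

/-- The Gruenberg map: with `F` free on `x_i` and `ΔF` free over `ℤ[F]` on the
`x_i − 1`, the induced module `ℤ[G] ⊗_{ℤ[F]} ΔF` is identified with `Fin d → ℤ[G]`
via the basis `1 ⊗ (x_i − 1)`, and the map sends `1 ⊗ (x_i − 1) ↦ g_i − 1`. -/
def gruenbergMap {G : Type} [Group G] {d : ℕ} (g : Fin d → G) :
    (Fin d → MonoidAlgebra ℤ G) →ₗ[MonoidAlgebra ℤ G] MonoidAlgebra ℤ G where
  toFun v := ∑ i, v i * (MonoidAlgebra.single (g i) 1 - 1)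
  map_add' v w := by simp [add_mul, Finset.sum_add_distrib]
  map_smul' a v := by simp [smul_eq_mul, mul_assoc, Finset.mul_sum]


/-! The relation sequence `0 → R → ℤG^d → ΔG → 0` is `ΔG ⊗ (0 → ΔG → ℤG → ℤ → 0)`.
`ΔG` is `ℤ`-free on the `g - 1` with `g ≠ 1`, and untwisting `x ⊗ h ↦ h x ⊗ h` shows that the
`h (g - 1) ⊗ h` form a `ℤ`-basis of `ΔG ⊗ ℤG`. Sending the basis vector `h • e_i` of `ℤG^d` to
`h (g_i - 1) ⊗ h` is then a `ℤ`-isomorphism `ℤG^d ≃ ΔG ⊗ ℤG`, equivariant for left multiplication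
and the diagonal action, which turns the Gruenberg map into `id ⊗ ε`. As `ΔG` is flat over `ℤ`,
`ker (id ⊗ ε) = ΔG ⊗ ΔG`. -/

namespace RelationModule

-- `Module ℤ (M ⊗[ℤ] N)` is found both as `AddCommGroup.toIntModule` and as the tensor product's
-- own structure; preferring the latter keeps the tensor-product API applicable.
attribute [local instance 2000] TensorProduct.leftModule

section AugmentationIdeal

variable {S : Type}

lemma aug_single (s : S) (c : ℤ) : aug S (single s c) = c := by
  simp [aug]

def augDiff (s s₀ : S) : LinearMap.ker (aug S) :=
  ⟨single s 1 - single s₀ 1, by simp [aug_single]⟩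

lemma coe_augDiff (s s₀ : S) : (augDiff s s₀ : S →₀ ℤ) = single s 1 - single s₀ 1 := rfl

variable (s₀ : S)

def restrictCompl : (S →₀ ℤ) →ₗ[ℤ] ({s // s ≠ s₀} →₀ ℤ) := lsubtypeDomain {s | s ≠ s₀}

lemma restrictCompl_apply (f : S →₀ ℤ) (s : {s // s ≠ s₀}) : restrictCompl s₀ f s = f s := rfl

lemma linearCombination_augDiff_restrictCompl (f : S →₀ ℤ) :
    ((linearCombination ℤ fun s : {s // s ≠ s₀} => augDiff s.1 s₀) (restrictCompl s₀ f) : S →₀ ℤ)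
      = f - single s₀ (aug S f) := by
  classical
  induction f using Finsupp.induction_linear with
  | zero => simp
  | add f g hf hg => simp only [map_add, Submodule.coe_add, hf, hg, single_add]; abel
  | single s c =>
    by_cases hs : s = s₀
    · subst hs
      have hres : restrictCompl s (single s c) = 0 := by
        ext ⟨t, ht⟩
        simp [restrictCompl_apply, Ne.symm ht]
      simp [hres, aug_single]
    · have hres : restrictCompl s₀ (single s c) = single ⟨s, hs⟩ c := by
        ext ⟨t, ht⟩
        simp [restrictCompl_apply, single_apply, Subtype.ext_iff]
      simp [hres, aug_single, coe_augDiff, smul_sub]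

def augKerEquiv : LinearMap.ker (aug S) ≃ₗ[ℤ] ({s // s ≠ s₀} →₀ ℤ) :=
  .ofLinearMap (restrictCompl s₀ ∘ₗ (LinearMap.ker (aug S)).subtype)
    (linearCombination ℤ fun s => augDiff s.1 s₀)
    (by
      classical
      ext ⟨s, hs⟩ ⟨t, ht⟩
      simp [restrictCompl_apply, coe_augDiff, single_apply, Ne.symm ht])
    (LinearMap.ext fun x => Subtype.ext <| by
      simpa [x.2] using linearCombination_augDiff_restrictCompl s₀ x)

def augKerBasis : Module.Basis {s // s ≠ s₀} ℤ (LinearMap.ker (aug S)) :=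
  .ofRepr (augKerEquiv s₀)

lemma augKerBasis_apply (s : {s // s ≠ s₀}) : augKerBasis s₀ s = augDiff s.1 s₀ := by
  simp [augKerBasis, augKerEquiv]

end AugmentationIdeal

section Untwist

variable {k G V : Type} [CommRing k] [Group G] [DecidableEq G] [AddCommGroup V] [Module k V]
  (ρ : Representation k G V)

def twistFinsupp : (G →₀ V) ≃ₗ[k] (G →₀ V) :=
  .ofLinearMap (lsum k fun h => lsingle h ∘ₗ ρ h) (lsum k fun h => lsingle h ∘ₗ ρ h⁻¹)
    (by ext; simp) (by ext; simp)

def untwist : V ⊗[k] (G →₀ k) ≃ₗ[k] V ⊗[k] (G →₀ k) :=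
  finsuppScalarRight k k V G ≪≫ₗ twistFinsupp ρ ≪≫ₗ (finsuppScalarRight k k V G).symm

lemma untwist_tmul_single (x : V) (h : G) :
    untwist ρ (x ⊗ₜ single h 1) = ρ h x ⊗ₜ single h 1 := by
  simp [untwist, twistFinsupp, finsuppScalarRight_apply_tmul]

end Untwist

variable {G : Type} [Group G]

lemma deltaG_augDiff (γ a b : G) : deltaG G γ (augDiff a b) = augDiff (γ * a) (γ * b) := by
  ext : 1
  simp [deltaG, subRep, ofMulActionFinsupp, coe_augDiff, smul_eq_mul, mapDomain_sub]

lemma lTensor_subtype_tprod_deltaG (γ : G) (x : LinearMap.ker (aug G) ⊗[ℤ] LinearMap.ker (aug G)) :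
    LinearMap.lTensor _ (LinearMap.ker (aug G)).subtype (((deltaG G).tprod (deltaG G)) γ x)
      = TensorProduct.map (deltaG G γ) (ofMulActionFinsupp ℤ G G γ)
          (LinearMap.lTensor _ (LinearMap.ker (aug G)).subtype x) := by
  induction x using TensorProduct.induction_on with
  | zero => simp
  | tmul w v => rfl
  | add x y hx hy => simp only [map_add, hx, hy]

variable {d : ℕ} (e : Fin d ≃ {g : G // g ≠ 1})

lemma coeff_gruenbergMap_single (i : Fin d) (h : G) :
    (gruenbergMap (fun i => (e i).val) (Pi.single i (MonoidAlgebra.single h 1))).coeff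
      = single (h * e i) 1 - single h 1 := by
  simp [gruenbergMap, Pi.single_apply, mul_sub]

variable [DecidableEq G]

def twistedBasis : Module.Basis ({g : G // g ≠ 1} × G) ℤ (LinearMap.ker (aug G) ⊗[ℤ] (G →₀ ℤ)) :=
  ((augKerBasis 1).tensorProduct Finsupp.basisSingleOne).map (untwist (deltaG G))

lemma twistedBasis_apply (g : {g : G // g ≠ 1}) (h : G) :
    twistedBasis (g, h) = augDiff (h * g) h ⊗ₜ single h 1 := by
  rw [twistedBasis, Module.Basis.map_apply, Module.Basis.tensorProduct_apply, augKerBasis_apply,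
    Finsupp.coe_basisSingleOne, untwist_tmul_single, deltaG_augDiff, mul_one]

-- Irreducible: unfolding it during unification exceeds the recursion limit; it is characterised
-- by `piEquivAugTensor_single`.
@[irreducible]
def piEquivAugTensor : (Fin d → MonoidAlgebra ℤ G) ≃ₗ[ℤ] LinearMap.ker (aug G) ⊗[ℤ] (G →₀ ℤ) :=
  (Pi.basis fun _ => MonoidAlgebra.basis G ℤ).equiv twistedBasis
    ((Equiv.sigmaEquivProd _ _).trans (e.prodCongr (Equiv.refl G)))

lemma piEquivAugTensor_single (i : Fin d) (h : G) :
    piEquivAugTensor e (Pi.single i (MonoidAlgebra.single h 1))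
      = augDiff (h * e i) h ⊗ₜ single h 1 := by
  have hbasis : Pi.single i (MonoidAlgebra.single h 1)
      = Pi.basis (fun _ => MonoidAlgebra.basis G ℤ) ⟨i, h⟩ := by simp
  rw [hbasis, piEquivAugTensor, Module.Basis.equiv_apply, ← twistedBasis_apply]
  rfl

lemma rid_lTensor_aug_piEquivAugTensor (v : Fin d → MonoidAlgebra ℤ G) :
    (TensorProduct.rid ℤ (LinearMap.ker (aug G))
        (LinearMap.lTensor (LinearMap.ker (aug G)) (aug G) (piEquivAugTensor e v)) : G →₀ ℤ)
      = (gruenbergMap (fun i => (e i).val) v).coeff := by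
  suffices (LinearMap.ker (aug G)).subtype
      ∘ₗ (TensorProduct.rid ℤ (LinearMap.ker (aug G))).toLinearMap
      ∘ₗ LinearMap.lTensor (LinearMap.ker (aug G)) (aug G) ∘ₗ (piEquivAugTensor e).toLinearMap
      = (MonoidAlgebra.coeffLinearEquiv ℤ).toLinearMap
      ∘ₗ (gruenbergMap (fun i => (e i).val)).restrictScalars ℤ from
    LinearMap.congr_fun this v
  refine (Pi.basis fun _ => MonoidAlgebra.basis G ℤ).ext fun ⟨i, h⟩ => ?_
  simp [piEquivAugTensor_single, aug_single, coe_augDiff, coeff_gruenbergMap_single]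

lemma restrictScalars_ker_gruenbergMap :
    (LinearMap.ker (gruenbergMap fun i => (e i).val)).restrictScalars ℤ
      = (LinearMap.ker (AlgebraTensorModule.lTensor ℤ (LinearMap.ker (aug G)) (aug G))).comap
          (piEquivAugTensor e).toLinearMap := by
  ext v
  rw [Submodule.restrictScalars_mem, LinearMap.mem_ker, Submodule.mem_comap, LinearMap.mem_ker,
    AlgebraTensorModule.coe_lTensor, LinearEquiv.coe_coe,
    ← (TensorProduct.rid ℤ (LinearMap.ker (aug G))).map_eq_zero_iff, ← Submodule.coe_eq_zero,
    rid_lTensor_aug_piEquivAugTensor, MonoidAlgebra.coeff_eq_zero]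

lemma piEquivAugTensor_single_smul (γ : G) (v : Fin d → MonoidAlgebra ℤ G) :
    piEquivAugTensor e (MonoidAlgebra.single γ (1 : ℤ) • v)
      = TensorProduct.map (deltaG G γ) (ofMulActionFinsupp ℤ G G γ) (piEquivAugTensor e v) := by
  suffices (piEquivAugTensor e).toLinearMap
        ∘ₗ DistribSMul.toLinearMap ℤ _ (MonoidAlgebra.single γ (1 : ℤ))
      = TensorProduct.map (deltaG G γ) (ofMulActionFinsupp ℤ G G γ)
        ∘ₗ (piEquivAugTensor e).toLinearMap from
    LinearMap.congr_fun this v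
  refine (Pi.basis fun _ => MonoidAlgebra.basis G ℤ).ext fun ⟨i, h⟩ => ?_
  simp [← Pi.single_smul', piEquivAugTensor_single, deltaG_augDiff, ofMulActionFinsupp, mul_assoc]

-- An additive equivalence, so that its `ℤ`-linear version `toIntLinearEquiv` carries exactly
-- the `ℤ`-module structures of the statement below.
def relationModuleEquiv :
    LinearMap.ker (gruenbergMap fun i => (e i).val) ≃+
      LinearMap.ker (aug G) ⊗[ℤ] LinearMap.ker (aug G) :=
  (LinearEquiv.ofEq _ _ (restrictScalars_ker_gruenbergMap e) ≪≫ₗ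
    (piEquivAugTensor e).ofSubmodule' _ ≪≫ₗ (LinearMap.tensorKerEquiv ℤ _ (aug G)).symm).toAddEquiv

lemma lTensor_subtype_relationModuleEquiv (r : LinearMap.ker (gruenbergMap fun i => (e i).val)) :
    LinearMap.lTensor _ (LinearMap.ker (aug G)).subtype (relationModuleEquiv e r)
      = piEquivAugTensor e r :=
  LinearMap.lTensor_ker_subtype_tensorKerEquiv_symm ℤ _ (aug G) _

end RelationModule

open RelationModule in
theorem stmt_5_general {G : Type} [Group G] [Fintype G]
    (e : Fin (Fintype.card G - 1) ≃ {x : G // x ≠ 1}) :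
    ∃ φ : (LinearMap.ker (gruenbergMap (fun i => (e i).val))) ≃ₗ[ℤ]
        ((LinearMap.ker (aug G)) ⊗[ℤ] (LinearMap.ker (aug G))),
      ∀ (γ : G) (r : LinearMap.ker (gruenbergMap (fun i => (e i).val))),
        φ ((MonoidAlgebra.single γ (1 : ℤ)) • r)
          = (((deltaG G).tprod (deltaG G)) γ) (φ r) := by
  classical
  refine ⟨(relationModuleEquiv e).toIntLinearEquiv, fun γ r => ?_⟩
  apply Module.Flat.lTensor_preserves_injective_linearMap _
    (LinearMap.ker (aug G)).injective_subtype
  rw [AddEquiv.coe_toIntLinearEquiv, lTensor_subtype_tprod_deltaG,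
    lTensor_subtype_relationModuleEquiv, lTensor_subtype_relationModuleEquiv, Submodule.coe_smul,
    piEquivAugTensor_single_smul]

/-- Let `G` be a nontrivial finite group and take the generating set
`G \ {1}`, of `d = |G| − 1` elements (enumerated by an equivalence
`e : Fin (|G| − 1) ≃ {x : G // x ≠ 1}`).  Then the relation module
`R = R_{|G|−1}` (the kernel of the Gruenberg map) is isomorphic as a `ℤG`-module to
`ΔG ⊗_ℤ ΔG` with the diagonal `G`-action. -/
theorem stmt_5 {G : Type} [Group G] [Fintype G] (hG : Nontrivial G)
    (e : Fin (Fintype.card G - 1) ≃ {x : G // x ≠ 1}) :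
    ∃ φ : (LinearMap.ker (gruenbergMap (fun i => (e i).val))) ≃ₗ[ℤ]
        ((LinearMap.ker (aug G)) ⊗[ℤ] (LinearMap.ker (aug G))),
      ∀ (γ : G) (r : LinearMap.ker (gruenbergMap (fun i => (e i).val))),
        φ ((MonoidAlgebra.single γ (1 : ℤ)) • r)
          = (((deltaG G).tprod (deltaG G)) γ) (φ r) :=
  stmt_5_general e
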